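/- arXiv:1407.5883 — 4 statements merged into one kernel-verified Lean document; each statement's English description precedes it below -/
import Mathlib

section
/- Fix η ∈ (0,1]. As ℰ → 0+, I_Z(ℰ, η)/(ηℰ) = log(1/(ηℰ)) + 1 - H₂(η)/η + o(1); that is, lim_{ℰ→0+} [I_Z(ℰ,η)/(ηℰ) - log(1/(ηℰ))] = 1 - H₂(η)/η, with the convention H₂(1) = 0. -/
open Real Filter

noncomputable def H2 (x : ℝ) : ℝ := x * Real.log (1 / x) + (1 - x) * Real.log (1 / (1 - x))

noncomputable def IZ (q μ : ℝ) : ℝ := H2 (q * μ) - q * H2 μ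

/-! Writing `x = ηℰ`, one has `IZ ℰ η / x = H2 x / x - H2 η / η`, and
`H2 x / x - log (1/x) = -(1 - x) · log (1 - x) / x`, which tends to `1` as `x → 0` because
`log (1 - x) / x` is a difference quotient of `log (1 - ·)` at `0`, whose derivative there is `-1`. -/

lemma tendsto_log_one_sub_div_nhdsNE_zero :
    Tendsto (fun t : ℝ => Real.log (1 - t) / t) (nhdsWithin 0 {0}ᶜ) (nhds (-1)) := by
  have hderiv : HasDerivAt (fun t : ℝ => Real.log (1 - t)) (-1) 0 := by
    simpa using ((hasDerivAt_id (0 : ℝ)).const_sub 1).log (by norm_num)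
  refine (hasDerivAt_iff_tendsto_slope_zero.mp hderiv).congr fun t => ?_
  simp [div_eq_inv_mul]

lemma H2_div_sub_log_one_div {x : ℝ} (hx : x ≠ 0) :
    H2 x / x - Real.log (1 / x) = (1 - x) * -(Real.log (1 - x) / x) := by
  simp only [H2, one_div, Real.log_inv]
  field_simp
  ring

lemma tendsto_H2_div_sub_log_one_div :
    Tendsto (fun x : ℝ => H2 x / x - Real.log (1 / x)) (nhdsWithin 0 {0}ᶜ) (nhds 1) := by
  have hfactor : Tendsto (fun x : ℝ => 1 - x) (nhdsWithin 0 {0}ᶜ) (nhds 1) := by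
    simpa using ((continuous_sub_left (1 : ℝ)).tendsto 0).mono_left nhdsWithin_le_nhds
  have hlim := hfactor.mul tendsto_log_one_sub_div_nhdsNE_zero.neg
  rw [one_mul, neg_neg] at hlim
  refine hlim.congr' ?_
  filter_upwards [self_mem_nhdsWithin] with x hx
  exact (H2_div_sub_log_one_div hx).symm

lemma IZ_div_mul {q : ℝ} (μ : ℝ) (hq : q ≠ 0) :
    IZ q μ / (q * μ) = H2 (q * μ) / (q * μ) - H2 μ / μ := by
  rw [IZ, sub_div, mul_div_mul_left _ _ hq]

lemma tendsto_mul_const_nhdsGT_zero_nhdsNE {c : ℝ} (hc : c ≠ 0) :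
    Tendsto (fun E : ℝ => E * c) (nhdsWithin 0 (Set.Ioi 0)) (nhdsWithin 0 {0}ᶜ) := by
  refine tendsto_nhdsWithin_of_tendsto_nhds_of_eventually_within _ ?_ ?_
  · simpa using ((continuous_mul_const c).tendsto 0).mono_left nhdsWithin_le_nhds
  · filter_upwards [self_mem_nhdsWithin] with E (hE : 0 < E)
    exact mul_ne_zero hE.ne' hc

theorem IZ_photon_efficiency (η : ℝ) (hη : η ∈ Set.Ioc (0 : ℝ) 1) :
    Tendsto (fun E : ℝ => IZ E η / (η * E) - Real.log (1 / (η * E)))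
      (nhdsWithin 0 (Set.Ioi 0)) (nhds (1 - H2 η / η)) := by
  have hη0 : η ≠ 0 := hη.1.ne'
  have hlim := (tendsto_H2_div_sub_log_one_div.comp
    (tendsto_mul_const_nhdsGT_zero_nhdsNE hη0)).sub_const (H2 η / η)
  refine hlim.congr' ?_
  filter_upwards [self_mem_nhdsWithin] with E (hE : 0 < E)
  rw [Function.comp_apply, mul_comm η E, IZ_div_mul η hE.ne']
  ring
end

section
/- Let μ_coh(q,ℰ) = 1 - exp(-ηℰ/q) and q*(ℰ) = (ηℰ/2)·log(1/ℰ). Then for fixed η ∈ (0,1], as ℰ → 0+, I_Z(q*(ℰ), μ_coh(q*(ℰ),ℰ))/(ηℰ) = log(1/(ηℰ)) - log log(1/ℰ) + log 2 - 1 + o(1). -/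
open Real Filter

noncomputable def qstar (η E : ℝ) : ℝ := η * E / 2 * Real.log (1 / E)

noncomputable def μcoh (η q E : ℝ) : ℝ := 1 - Real.exp (-(η * E / q))

/-!
Put `t = ηℰ/q* = 2 / log (1/ℰ)`, so that `μ = μ_coh = 1 - e^{-t}` and `log (1/(1-μ)) = t`. The
entropies then collapse to `I_Z(q, μ) = qμ log (1/q) + (1 - qμ) log (1/(1 - qμ)) - q t e^{-t}`, and
since `log (1/(ηℰ)) - log log (1/ℰ) + log 2 = -log q*`, the error term equals
`-(μ/t - 1) log q* + ((1 - x) log (1/(1 - x)) / x) (μ/t) + 1 - e^{-t}` with `x = q* μ → 0`.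
The last three terms tend to `1 + 1 - 1`, and `μ/t - 1 ~ -t/2` against
`log q* = log η - 2/t - log t` gives `(μ/t - 1) log q* → 1`.
-/

open Topology

theorem tendsto_one_sub_exp_neg_div_sub_one_div :
    Tendsto (fun t : ℝ => ((1 - exp (-t)) / t - 1) / t) (𝓝[≠] 0) (𝓝 (-(1 / 2))) := by
  have ho := ((exp_sub_sum_range_succ_isLittleO_pow 2).comp_tendsto
    (continuous_neg.tendsto' (0 : ℝ) 0 neg_zero)).tendsto_div_nhds_zero
  have h := ho.neg.sub_const (1 / 2)
  rw [neg_zero, zero_sub] at h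
  refine (h.mono_left nhdsWithin_le_nhds).congr' ?_
  filter_upwards [self_mem_nhdsWithin] with t (ht : t ≠ 0)
  simp only [Function.comp_apply, Finset.sum_range_succ, Finset.sum_range_zero]
  field_simp
  ring

theorem tendsto_one_sub_exp_neg_div :
    Tendsto (fun t : ℝ => (1 - exp (-t)) / t) (𝓝[≠] 0) (𝓝 1) := by
  have hid : Tendsto (fun t : ℝ => t) (𝓝[≠] 0) (𝓝 0) := tendsto_id.mono_left nhdsWithin_le_nhds
  have h := (hid.mul tendsto_one_sub_exp_neg_div_sub_one_div).add_const 1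
  rw [zero_mul, zero_add] at h
  refine h.congr' ?_
  filter_upwards [self_mem_nhdsWithin] with t (ht : t ≠ 0)
  field_simp
  ring

theorem tendsto_one_sub_exp_neg_div_sub_one_mul (c : ℝ) :
    Tendsto (fun t : ℝ => ((1 - exp (-t)) / t - 1) * (c - 2 / t - log t)) (𝓝[≠] 0) (𝓝 1) := by
  have hs := tendsto_one_sub_exp_neg_div_sub_one_div
  have hid : Tendsto (fun t : ℝ => t) (𝓝[≠] 0) (𝓝 0) := tendsto_id.mono_left nhdsWithin_le_nhds
  have hmul_log : Tendsto (fun t : ℝ => t * log t) (𝓝[≠] 0) (𝓝 0) :=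
    (continuous_mul_log.tendsto' 0 0 (by simp)).mono_left nhdsWithin_le_nhds
  have h := ((hid.mul hs).mul_const c).sub (hs.const_mul 2) |>.sub (hs.mul hmul_log)
  rw [show (0 * -(1 / 2) * c - 2 * -(1 / 2) - -(1 / 2) * 0 : ℝ) = 1 by norm_num] at h
  refine h.congr' ?_
  filter_upwards [self_mem_nhdsWithin] with t (ht : t ≠ 0)
  field_simp

theorem tendsto_one_sub_mul_log_one_div_one_sub_div :
    Tendsto (fun x : ℝ => (1 - x) * log (1 / (1 - x)) / x) (𝓝[≠] 0) (𝓝 1) := by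
  have hderiv : HasDerivAt (fun x : ℝ => log (1 - x)) (-1) 0 := by
    simpa using ((hasDerivAt_id (0 : ℝ)).const_sub 1).log (by norm_num : (1 : ℝ) - 0 ≠ 0)
  have h := ((tendsto_const_nhds (x := (1 : ℝ))).sub tendsto_id).mono_left nhdsWithin_le_nhds
    |>.mul hderiv.tendsto_slope_zero.neg
  rw [sub_zero, neg_neg, one_mul] at h
  refine h.congr fun x => ?_
  simp only [id, zero_add, sub_zero, log_one, smul_eq_mul, one_div, log_inv]
  ring

theorem IZ_one_sub_exp_neg (q t : ℝ) :
    IZ q (1 - exp (-t)) = -(q * (1 - exp (-t)) * log q)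
      + (1 - q * (1 - exp (-t))) * log (1 / (1 - q * (1 - exp (-t)))) - q * t * exp (-t) := by
  rcases eq_or_ne q 0 with rfl | hq
  · simp [IZ, H2]
  rcases eq_or_ne t 0 with rfl | ht
  · simp [IZ, H2]
  have hμ : 1 - exp (-t) ≠ 0 := sub_ne_zero.2 fun h => ht (by simpa using (exp_eq_one_iff _).1 h.symm)
  simp only [IZ, H2, one_div, log_inv, log_mul hq hμ, sub_sub_cancel, log_exp]
  ring

theorem tendsto_IZ_div_add_log {α : Type*} {l : Filter α} {q t : α → ℝ}
    (ht : Tendsto t l (𝓝[≠] 0)) (hx : Tendsto (fun a => q a * (1 - exp (-t a))) l (𝓝[≠] 0))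
    (hlog : Tendsto (fun a => ((1 - exp (-t a)) / t a - 1) * log (q a)) l (𝓝 1)) :
    Tendsto (fun a => IZ (q a) (1 - exp (-t a)) / (q a * t a) + log (q a) + 1) l (𝓝 0) := by
  have hexp : Tendsto (fun a => exp (-t a)) l (𝓝 1) := by
    simpa [Function.comp_def] using
      (continuous_exp.tendsto _).comp (tendsto_nhds_of_tendsto_nhdsWithin ht).neg
  have h := (hlog.neg.add ((tendsto_one_sub_mul_log_one_div_one_sub_div.comp hx).mul
    (tendsto_one_sub_exp_neg_div.comp ht))).sub hexp |>.add_const 1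
  rw [show (-1 + 1 * 1 - 1 + 1 : ℝ) = 0 by norm_num] at h
  refine h.congr' ?_
  filter_upwards [tendsto_nhdsWithin_iff.1 ht |>.2, tendsto_nhdsWithin_iff.1 hx |>.2]
    with a (hta : t a ≠ 0) (hxa : q a * (1 - exp (-t a)) ≠ 0)
  have hqa := left_ne_zero_of_mul hxa
  have hμa := right_ne_zero_of_mul hxa
  simp only [Function.comp_apply, IZ_one_sub_exp_neg]
  field_simp
  ring

/-- `ηℰ / q*(ℰ)`, the mean number of detected photons in a pulse sent at the duty cycle `q*`. -/
noncomputable def pulseEnergy (E : ℝ) : ℝ := 2 / log (1 / E)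

theorem mul_eq_qstar_mul_pulseEnergy (η : ℝ) {E : ℝ} (hL : log (1 / E) ≠ 0) :
    η * E = qstar η E * pulseEnergy E := by
  rw [qstar, pulseEnergy]
  field_simp

theorem log_qstar {η E : ℝ} (hη : η ≠ 0) (hE : E ≠ 0) (hL : log (1 / E) ≠ 0) :
    log (qstar η E) = log η - 2 / pulseEnergy E - log (pulseEnergy E) := by
  rw [qstar, pulseEnergy, log_mul (by positivity) hL, log_div (by positivity) two_ne_zero,
    log_mul hη hE, log_div two_ne_zero hL, div_div_cancel₀ two_ne_zero, one_div, log_inv]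
  ring

theorem eventually_log_one_div_pos : ∀ᶠ E in 𝓝[>] (0 : ℝ), 0 < log (1 / E) := by
  filter_upwards [Ioo_mem_nhdsGT (zero_lt_one' ℝ)] with E ⟨hE0, hE1⟩
  exact log_pos (one_lt_one_div hE0 hE1)

theorem tendsto_pulseEnergy : Tendsto pulseEnergy (𝓝[>] 0) (𝓝[>] 0) := by
  have hL : Tendsto (fun E : ℝ => log (1 / E)) (𝓝[>] 0) atTop :=
    (tendsto_log_atTop.comp tendsto_inv_nhdsGT_zero).congr fun E => by
      rw [Function.comp_apply, one_div]
  have h := hL.inv_tendsto_atTop.const_mul 2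
  rw [mul_zero] at h
  refine tendsto_nhdsWithin_iff.2 ⟨h.congr fun E => (div_eq_mul_inv _ _).symm, ?_⟩
  filter_upwards [eventually_log_one_div_pos] with E hE
  exact div_pos two_pos hE

theorem tendsto_qstar_mul_one_sub_exp_neg {η : ℝ} (hη : η ≠ 0) :
    Tendsto (fun E => qstar η E * (1 - exp (-pulseEnergy E))) (𝓝[>] 0) (𝓝[≠] 0) := by
  have hq : Tendsto (qstar η) (𝓝[>] 0) (𝓝 0) := by
    have h := ((continuous_mul_log.tendsto' 0 0 (by simp)).mono_left
      (nhdsWithin_le_nhds (s := Set.Ioi 0))).const_mul (-(η / 2))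
    rw [mul_zero] at h
    refine h.congr fun E => ?_
    rw [qstar, one_div, log_inv]
    ring
  have hμ : Tendsto (fun E => 1 - exp (-pulseEnergy E)) (𝓝[>] 0) (𝓝 0) := by
    simpa [Function.comp_def] using ((continuous_exp.tendsto _).comp
      (tendsto_nhds_of_tendsto_nhdsWithin tendsto_pulseEnergy).neg).const_sub 1
  refine tendsto_nhdsWithin_iff.2 ⟨by simpa using hq.mul hμ, ?_⟩
  filter_upwards [self_mem_nhdsWithin, eventually_log_one_div_pos,
    tendsto_nhdsWithin_iff.1 tendsto_pulseEnergy |>.2] with E (hE : 0 < E) hL ht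
  have hqE : qstar η E ≠ 0 := by rw [qstar]; positivity
  exact mul_ne_zero hqE (sub_ne_zero.2 (exp_lt_one_iff.2 (neg_neg_of_pos ht)).ne')

theorem coherent_Z_efficiency (η : ℝ) (hη : η ∈ Set.Ioc (0 : ℝ) 1) :
    Tendsto (fun E : ℝ =>
        IZ (qstar η E) (μcoh η (qstar η E) E) / (η * E)
          - (Real.log (1 / (η * E)) - Real.log (Real.log (1 / E)) + Real.log 2 - 1))
      (nhdsWithin 0 (Set.Ioi 0)) (nhds 0) := by
  have hη0 := hη.1.ne'
  have ht := tendsto_pulseEnergy.mono_right (nhdsGT_le_nhdsNE 0)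
  have hx := tendsto_qstar_mul_one_sub_exp_neg hη0
  have hlog : Tendsto (fun E => ((1 - exp (-pulseEnergy E)) / pulseEnergy E - 1)
      * log (qstar η E)) (𝓝[>] 0) (𝓝 1) :=
    ((tendsto_one_sub_exp_neg_div_sub_one_mul (log η)).comp ht).congr' <| by
      filter_upwards [self_mem_nhdsWithin, eventually_log_one_div_pos] with E (hE : 0 < E) hL
      rw [Function.comp_apply, log_qstar hη0 hE.ne' hL.ne']
  refine (tendsto_IZ_div_add_log ht hx hlog).congr' ?_
  filter_upwards [self_mem_nhdsWithin, eventually_log_one_div_pos,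
    tendsto_nhdsWithin_iff.1 hx |>.2] with E (hE : 0 < E) hL (hxE : _ ≠ 0)
  have hηE := mul_eq_qstar_mul_pulseEnergy η hL.ne'
  have hlogq : log (1 / (η * E)) - log (log (1 / E)) + log 2 = -log (qstar η E) := by
    rw [log_qstar hη0 hE.ne' hL.ne', pulseEnergy, div_div_cancel₀ two_ne_zero,
      log_div two_ne_zero hL.ne', one_div (η * E), log_inv, log_mul hη0 hE.ne', one_div E, log_inv]
    ring
  rw [μcoh, hηE, mul_div_cancel_left₀ _ (left_ne_zero_of_mul hxE), ← hηE, hlogq]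
  ring
end

section
/- The maximum-entropy bound: b·g((1-η)ℰ) evaluated with b = ⌈1/(ℰ log(1/ℰ))⌉ and per-mode mean photon number (1-η)ℰ satisfies b·g((1-η)ℰ) = (1-η) + o(1) as ℰ → 0+ for fixed η ∈ (0,1), where g(x) = (x+1)log(x+1) - x log x and g(0) := 0. -/
open Real Filter

noncomputable def g (x : ℝ) : ℝ := (x + 1) * Real.log (x + 1) - x * Real.log x

lemma g_cont : Continuous g := by
  unfold g
  have h1 : Continuous fun x : ℝ => (x + 1) * Real.log (x + 1) :=
    Real.continuous_mul_log.comp (continuous_id.add continuous_const)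
  exact h1.sub Real.continuous_mul_log

theorem max_entropy_bound (η : ℝ) (hη : η ∈ Set.Ioo (0 : ℝ) 1) :
    Tendsto (fun E : ℝ => ((⌈1 / (E * Real.log (1 / E))⌉₊ : ℕ) : ℝ) * g ((1 - η) * E))
      (nhdsWithin 0 (Set.Ioi 0)) (nhds (1 - η)) := by
  set c : ℝ := 1 - η with hcdef
  have hc0 : 0 < c := by simp only [hcdef]; linarith [hη.2]
  set u : ℝ → ℝ := fun E => 1 / (E * Real.log (1 / E)) with hu
  -- basic limits
  have hlog : Tendsto Real.log (nhdsWithin 0 (Set.Ioi 0)) atBot :=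
    Real.tendsto_log_nhdsGT_zero
  have hneg : Tendsto (fun E => -Real.log E) (nhdsWithin 0 (Set.Ioi 0)) atTop :=
    tendsto_neg_atBot_atTop.comp hlog
  have hinv : Tendsto (fun E => (Real.log E)⁻¹) (nhdsWithin 0 (Set.Ioi 0)) (nhds 0) := by
    have := hneg.inv_tendsto_atTop.neg
    simpa [inv_neg] using this
  have hL : Tendsto (fun E => Real.log (1 / E)) (nhdsWithin 0 (Set.Ioi 0)) atTop := by
    refine hneg.congr ?_
    intro E
    rw [one_div, Real.log_inv]
  have hLinv : Tendsto (fun E => (Real.log (1 / E))⁻¹) (nhdsWithin 0 (Set.Ioi 0)) (nhds 0) :=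
    hL.inv_tendsto_atTop
  -- g(cE) → 0
  have hg0 : Tendsto (fun E => g (c * E)) (nhdsWithin 0 (Set.Ioi 0)) (nhds 0) := by
    have hcont : Continuous fun E : ℝ => g (c * E) :=
      g_cont.comp (continuous_const.mul continuous_id)
    have h2 := hcont.tendsto 0
    have h0 : g (c * 0) = 0 := by simp [g]
    rw [h0] at h2
    exact h2.mono_left nhdsWithin_le_nhds
  -- eventual set: 0 < E, E < 1/2, c*E < 1
  have hev : ∀ᶠ E in nhdsWithin 0 (Set.Ioi 0),
      0 < E ∧ E < 1 / 2 ∧ c * E < 1 := by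
    have h1 : Set.Ioo (0:ℝ) (min (1/2) (1/c)) ∈ nhdsWithin 0 (Set.Ioi 0) := by
      apply Ioo_mem_nhdsGT_of_mem
      constructor
      · exact le_refl 0
      · exact lt_min (by norm_num) (by positivity)
    filter_upwards [h1] with E hE
    obtain ⟨hE0, hE1⟩ := hE
    refine ⟨hE0, lt_of_lt_of_le hE1 (min_le_left _ _), ?_⟩
    have : E < 1 / c := lt_of_lt_of_le hE1 (min_le_right _ _)
    calc c * E < c * (1 / c) := by exact mul_lt_mul_of_pos_left this hc0
    _ = 1 := by field_simp
  -- positivity of L on the eventual set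
  have hLpos : ∀ E : ℝ, 0 < E → E < 1 / 2 → 0 < Real.log (1 / E) := by
    intro E hE0 hE1
    apply Real.log_pos
    rw [lt_div_iff₀ hE0]; linarith
  -- pieces
  set F1 : ℝ → ℝ := fun E => ((⌈u E⌉₊ : ℝ) - u E) * g (c * E) with hF1
  set F2 : ℝ → ℝ := fun E => (c * E + 1) * Real.log (c * E + 1) * (E * Real.log (1 / E))⁻¹
    with hF2
  set F3 : ℝ → ℝ := fun E => c * (Real.log c * (Real.log E)⁻¹ + 1) with hF3
  -- F1 → 0 by squeeze
  have hF1lim : Tendsto F1 (nhdsWithin 0 (Set.Ioi 0)) (nhds 0) := by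
    apply squeeze_zero' ?_ ?_ hg0
    · filter_upwards [hev] with E ⟨hE0, hE1, hE2⟩
      have hupos : 0 ≤ u E := by
        have := hLpos E hE0 hE1
        positivity
      have h1 : 0 ≤ (⌈u E⌉₊ : ℝ) - u E := sub_nonneg.2 (Nat.le_ceil _)
      have hgpos : 0 ≤ g (c * E) := by
        unfold g
        have hx0 : 0 < c * E := by positivity
        have h2 : 0 ≤ (c * E + 1) * Real.log (c * E + 1) := by
          apply mul_nonneg (by linarith)
          apply Real.log_nonneg; linarith
        have h3 : c * E * Real.log (c * E) ≤ 0 := by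
          apply mul_nonpos_of_nonneg_of_nonpos (le_of_lt hx0)
          exact Real.log_nonpos (le_of_lt hx0) (le_of_lt hE2)
        linarith
      exact mul_nonneg h1 hgpos
    · filter_upwards [hev] with E ⟨hE0, hE1, hE2⟩
      have hupos : 0 ≤ u E := by
        have := hLpos E hE0 hE1
        positivity
      have h1 : (⌈u E⌉₊ : ℝ) - u E ≤ 1 := by
        have := Nat.ceil_lt_add_one hupos
        linarith
      have hgpos : 0 ≤ g (c * E) := by
        unfold g
        have hx0 : 0 < c * E := by positivity
        have h2 : 0 ≤ (c * E + 1) * Real.log (c * E + 1) := by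
          apply mul_nonneg (by linarith)
          apply Real.log_nonneg; linarith
        have h3 : c * E * Real.log (c * E) ≤ 0 := by
          apply mul_nonpos_of_nonneg_of_nonpos (le_of_lt hx0)
          exact Real.log_nonpos (le_of_lt hx0) (le_of_lt hE2)
        linarith
      calc F1 E ≤ 1 * g (c * E) := mul_le_mul_of_nonneg_right h1 hgpos
      _ = g (c * E) := one_mul _
  -- F2 → 0 by squeeze
  have hF2lim : Tendsto F2 (nhdsWithin 0 (Set.Ioi 0)) (nhds 0) := by
    have hbound : Tendsto (fun E => (c * E + 1) * c * (Real.log (1 / E))⁻¹)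
        (nhdsWithin 0 (Set.Ioi 0)) (nhds 0) := by
      have h1 : Tendsto (fun E : ℝ => (c * E + 1) * c) (nhdsWithin 0 (Set.Ioi 0))
          (nhds ((c * 0 + 1) * c)) := by
        apply Tendsto.mono_left ?_ nhdsWithin_le_nhds
        exact (Continuous.tendsto (by continuity) 0)
      have := h1.mul hLinv
      simpa using this
    apply squeeze_zero' ?_ ?_ hbound
    · filter_upwards [hev] with E ⟨hE0, hE1, hE2⟩
      have hLp := hLpos E hE0 hE1
      have hx0 : 0 < c * E := by positivity
      have : 0 ≤ Real.log (c * E + 1) := Real.log_nonneg (by linarith)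
      have h2 : (0:ℝ) ≤ (E * Real.log (1 / E))⁻¹ := by positivity
      apply mul_nonneg (mul_nonneg (by linarith) this) h2
    · filter_upwards [hev] with E ⟨hE0, hE1, hE2⟩
      have hLp := hLpos E hE0 hE1
      have hx0 : 0 < c * E := by positivity
      have hlog_le : Real.log (c * E + 1) ≤ c * E := by
        have := Real.log_le_sub_one_of_pos (show (0:ℝ) < c * E + 1 by linarith)
        linarith
      have h2 : (0:ℝ) < (E * Real.log (1 / E))⁻¹ := by positivity
      calc F2 E ≤ (c * E + 1) * (c * E) * (E * Real.log (1 / E))⁻¹ := by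
            apply mul_le_mul_of_nonneg_right _ (le_of_lt h2)
            exact mul_le_mul_of_nonneg_left hlog_le (by linarith)
      _ = (c * E + 1) * c * (Real.log (1 / E))⁻¹ := by
            field_simp
  -- F3 → c
  have hF3lim : Tendsto F3 (nhdsWithin 0 (Set.Ioi 0)) (nhds c) := by
    have h1 : Tendsto (fun E : ℝ => Real.log c * (Real.log E)⁻¹ + 1)
        (nhdsWithin 0 (Set.Ioi 0)) (nhds 1) := by
      have := (tendsto_const_nhds (x := Real.log c)).mul hinv
      simpa using this.add (tendsto_const_nhds (x := (1:ℝ)))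
    have := (tendsto_const_nhds (x := c)).mul h1
    simpa using this
  -- combine
  have hsum : Tendsto (fun E => F1 E + F2 E + F3 E) (nhdsWithin 0 (Set.Ioi 0)) (nhds c) := by
    have := (hF1lim.add hF2lim).add hF3lim
    simpa using this
  refine hsum.congr' ?_ |>.mono_right (le_of_eq rfl)
  filter_upwards [hev] with E ⟨hE0, hE1, hE2⟩
  have hLp := hLpos E hE0 hE1
  have hElog : Real.log E ≠ 0 := by
    have : Real.log E < 0 := Real.log_neg hE0 (by linarith)
    linarith
  have hLeq : Real.log (1 / E) = -Real.log E := by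
    rw [one_div, Real.log_inv]
  have hx0 : 0 < c * E := by positivity
  -- goal: F1 E + F2 E + F3 E = ⌈u E⌉₊ * g (c*E)
  have hEne : E ≠ 0 := hE0.ne'
  simp only [hF1, hF2, hF3, hu, g]
  rw [hLeq, Real.log_mul (ne_of_gt hc0) (ne_of_gt hE0)]
  field_simp
  ring
end

section
/- With b = b(ℰ) = ⌈1/(ℰ log(1/ℰ))⌉ and fixed η ∈ (0,1), the quantity b·g((1-η)ℰ/b) → 0 as ℰ → 0+, where g(x) = (x+1)log(x+1) - x log x, g(0) := 0. -/
open Real Filter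

noncomputable def bfun (E : ℝ) : ℝ := ((⌈1 / (E * Real.log (1 / E))⌉₊ : ℕ) : ℝ)

/-!
Writing `x = (1 - η)ℰ / b`, the bound `g x ≤ x (1 + x - log x)` turns `b g(x)` into
`(1 - η)ℰ (1 + x - log x)`. Since `1 ≤ b ≤ 2/ℰ` for small `ℰ`, we have `x ≤ ℰ` and
`-log x ≤ log (2 / (1 - η)) - 2 log ℰ`, so `b g(x) = O(ℰ + ℰ |log ℰ|) → 0`.
-/

lemma g_nonneg {x : ℝ} (hx : 0 ≤ x) : 0 ≤ g x := by
  have hlog : 0 ≤ log (x + 1) := log_nonneg (by linarith)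
  have hdiff : 0 ≤ x * (log (x + 1) - log x) := by
    rcases hx.eq_or_lt with rfl | hx
    · simp
    · exact mul_nonneg hx.le (sub_nonneg.2 (log_le_log hx (by linarith)))
  calc 0 ≤ log (x + 1) + x * (log (x + 1) - log x) := add_nonneg hlog hdiff
    _ = g x := by unfold g; ring

lemma g_le {x : ℝ} (hx : 0 ≤ x) : g x ≤ x * (1 + x - log x) := by
  have h : (x + 1) * log (x + 1) ≤ (x + 1) * x :=
    mul_le_mul_of_nonneg_left (by linarith [log_le_sub_one_of_pos (by linarith : 0 < x + 1)])
      (by linarith)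
  unfold g
  linarith

lemma one_le_bfun {E : ℝ} (hE0 : 0 < E) (hE1 : E < 1) : 1 ≤ bfun E := by
  have hL : 0 < log (1 / E) := log_pos (one_lt_one_div hE0 hE1)
  unfold bfun
  exact_mod_cast Nat.one_le_ceil_iff.2 (by positivity)

lemma bfun_le_two_div {E : ℝ} (hE0 : 0 < E) (hE : E ≤ exp (-1)) : bfun E ≤ 2 / E := by
  have hL : 1 ≤ log (1 / E) := by
    rw [one_div, log_inv, le_neg, ← log_exp (-1)]
    exact log_le_log hE0 hE
  have hE1 : E ≤ 1 := hE.trans (exp_le_one_iff.2 (by norm_num))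
  have hceil : 1 / (E * log (1 / E)) ≤ 1 / E :=
    one_div_le_one_div_of_le hE0 (le_mul_of_one_le_right hE0.le hL)
  have hone : 1 ≤ 1 / E := one_le_one_div hE0 hE1
  calc bfun E ≤ 1 / (E * log (1 / E)) + 1 := (Nat.ceil_lt_add_one (by positivity)).le
    _ ≤ 2 / E := by rw [show 2 / E = 1 / E + 1 / E by ring]; linarith

lemma mul_g_div_bfun_le {c E : ℝ} (hc : 0 < c) (hE0 : 0 < E) (hE : E ≤ exp (-1)) :
    bfun E * g (c * E / bfun E) ≤ c * E * (1 + c * E + log 2 - log c) - 2 * c * (E * log E) := by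
  have hb1 : 1 ≤ bfun E := one_le_bfun hE0 (hE.trans_lt (exp_lt_one_iff.2 (by norm_num)))
  have hb0 : 0 < bfun E := one_pos.trans_le hb1
  set x := c * E / bfun E with hx
  have hx0 : 0 ≤ x := by positivity
  have hbx : bfun E * x = c * E := by rw [hx]; field_simp
  have hxle : x ≤ c * E := div_le_self (by positivity) hb1
  have hlogb : log (bfun E) ≤ log 2 - log E := by
    rw [← log_div two_ne_zero hE0.ne']
    exact log_le_log hb0 (bfun_le_two_div hE0 hE)
  have hlogx : log x = log c + log E - log (bfun E) := by
    rw [hx, log_div (by positivity) hb0.ne', log_mul hc.ne' hE0.ne']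
  calc bfun E * g x ≤ bfun E * (x * (1 + x - log x)) :=
        mul_le_mul_of_nonneg_left (g_le hx0) hb0.le
    _ = c * E * (1 + x - log x) := by rw [← mul_assoc, hbx]
    _ ≤ c * E * (1 + c * E + (log 2 - log c - 2 * log E)) :=
        mul_le_mul_of_nonneg_left (by linarith) (by positivity)
    _ = c * E * (1 + c * E + log 2 - log c) - 2 * c * (E * log E) := by ring

theorem eve_entropy_vanishes (η : ℝ) (hη : η ∈ Set.Ioo (0 : ℝ) 1) :
    Tendsto (fun E : ℝ => bfun E * g ((1 - η) * E / bfun E))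
      (nhdsWithin 0 (Set.Ioi 0)) (nhds 0) := by
  have hc : 0 < 1 - η := sub_pos.2 hη.2
  set c := 1 - η
  set bound : ℝ → ℝ := fun E => c * E * (1 + c * E + log 2 - log c) - 2 * c * (E * log E)
  have hbound : Tendsto bound (nhdsWithin 0 (Set.Ioi 0)) (nhds 0) := by
    have hcont : Continuous bound := by fun_prop
    simpa [bound] using hcont.continuousWithinAt (s := Set.Ioi 0) (x := 0) |>.tendsto
  refine squeeze_zero' ?_ ?_ hbound <;>
    filter_upwards [Ioo_mem_nhdsGT (exp_pos (-1))] with E hE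
  · have hb : (0 : ℝ) ≤ bfun E := Nat.cast_nonneg _
    exact mul_nonneg hb (g_nonneg (div_nonneg (mul_nonneg hc.le hE.1.le) hb))
  · exact mul_g_div_bfun_le hc hE.1 hE.2.le
end
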